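/- arXiv:2301.03725 — 4 statements merged into one kernel-verified Lean document; each statement's English description precedes it below -/
import Mathlib

section
/- Let t, s, a, b, c, d be integers with a + t ≥ b ≥ a + s and c + t ≥ d ≥ c + s. The number of lattice paths from (a,b) to (c,d) using unit steps right or up that stay weakly below the line y = x + t and weakly above the line y = x + s equals Σ_{k ∈ ℤ} [ C(c+d-a-b, c-a-k(t-s+2)) - C(c+d-a-b, c-b-k(t-s+2)+t+1) ], where C denotes the binomial coefficient (with C(n,m)=0 when m<0 or m>n). -/
/-!
As functions of the starting point `(a, b)`, both sides satisfy Pascal's recursion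
`f (a, b) = f (a + 1, b) + f (a, b + 1)` inside the band and before the antidiagonal of `(c, d)`,
vanish on the walls `y = x + t + 1` and `y = x + s - 1` just outside the band, and equal
`[(a, b) = (c, d)]` on the antidiagonal of `(c, d)`. For the binomial sum this is the reflection
principle: its terms count free paths from the images of `(a, b)` under the group generated by the
reflections in the two walls, the translates `(a, b) + k (P, -P)` with `P = t - s + 2` positively
and their mirror images in `y = x + t + 1` negatively. On the upper wall a point is its own mirror
image, so the terms cancel in pairs; on the lower wall they cancel after shifting `k` by one.
-/

/-- A step is a unit step right `(1,0)` or up `(0,1)`. -/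
def IsStep (s : ℤ × ℤ) : Prop := s = (1, 0) ∨ s = (0, 1)

/-- The list of lattice points visited by a path starting at `(a,b)` with step list `l`. -/
def pathPoints (a b : ℤ) (l : List (ℤ × ℤ)) : List (ℤ × ℤ) :=
  l.scanl (fun p s => (p.1 + s.1, p.2 + s.2)) (a, b)

/-- A right/up lattice path from `(a,b)` to `(c,d)` staying weakly below `y = x + t`
and weakly above `y = x + s`. -/
def IsConfinedPath (t s a b c d : ℤ) (l : List (ℤ × ℤ)) : Prop :=
  (∀ x ∈ l, IsStep x) ∧ (pathPoints a b l).getLast? = some (c, d) ∧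
    ∀ p ∈ pathPoints a b l, p.1 + s ≤ p.2 ∧ p.2 ≤ p.1 + t

/-- Binomial coefficient with integer arguments, zero when `m < 0` or `m > n`. -/
def chooseZ (n m : ℤ) : ℤ :=
  if 0 ≤ m ∧ m ≤ n then (n.toNat.choose m.toNat : ℤ) else 0

open Function

lemma chooseZ_of_neg_left {n : ℤ} (m : ℤ) (hn : n < 0) : chooseZ n m = 0 := by
  rw [chooseZ, if_neg (by omega)]

lemma chooseZ_of_neg_right (n : ℤ) {m : ℤ} (hm : m < 0) : chooseZ n m = 0 := by
  rw [chooseZ, if_neg (by omega)]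

lemma chooseZ_natCast (n k : ℕ) : chooseZ n k = n.choose k := by
  unfold chooseZ
  split_ifs with h
  · simp
  · rw [Nat.choose_eq_zero_of_lt (by omega), Nat.cast_zero]

lemma chooseZ_zero_left (m : ℤ) : chooseZ 0 m = if m = 0 then 1 else 0 := by
  unfold chooseZ
  split_ifs <;> simp_all; omega

lemma chooseZ_zero_right {n : ℤ} (hn : 0 ≤ n) : chooseZ n 0 = 1 := by
  simp [chooseZ, hn]

lemma chooseZ_succ_succ {n : ℤ} (hn : 0 ≤ n) (m : ℤ) :
    chooseZ (n + 1) (m + 1) = chooseZ n m + chooseZ n (m + 1) := by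
  rcases lt_or_ge m 0 with hm | hm
  · rw [chooseZ_of_neg_right _ hm, zero_add]
    rcases (show m + 1 < 0 ∨ m + 1 = 0 by omega) with h | h
    · rw [chooseZ_of_neg_right _ h, chooseZ_of_neg_right _ h]
    · rw [h, chooseZ_zero_right hn, chooseZ_zero_right (by omega)]
  · lift n to ℕ using hn
    lift m to ℕ using hm
    exact_mod_cast (chooseZ_natCast (n + 1) (m + 1)).trans
      (by rw [Nat.choose_succ_succ, Nat.cast_add, ← chooseZ_natCast, ← chooseZ_natCast])

lemma support_chooseZ_subset (n : ℤ) : support (chooseZ n) ⊆ Set.Icc 0 n := by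
  intro m hm
  by_contra h
  exact hm (by rw [chooseZ, if_neg (by simpa using h)])

lemma hasFiniteSupport_chooseZ_sub_mul (n x : ℤ) {P : ℤ} (hP : P ≠ 0) :
    HasFiniteSupport fun k => chooseZ n (x - k * P) :=
  HasFiniteSupport.comp_of_injective (f := chooseZ n)
    (fun k l h => mul_right_cancel₀ hP (by simpa using h))
    ((Set.finite_Icc 0 n).subset (support_chooseZ_subset n))

lemma Int.eq_zero_of_mul_eq_of_abs_lt {k m P : ℤ} (h : k * P = m) (hm : |m| < P) : k = 0 := by
  have hm0 : m = 0 := Int.eq_zero_of_abs_lt_dvd ⟨k, h ▸ mul_comm k P⟩ hm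
  exact (mul_eq_zero.mp (h.trans hm0)).resolve_right ((abs_nonneg m).trans_lt hm).ne'

lemma finsum_sub_comp_sub_one_eq_zero {M : Type*} [AddCommGroup M] {f : ℤ → M}
    (hf : HasFiniteSupport f) : ∑ᶠ k, (f k - f (k - 1)) = 0 := by
  have hshift : ∑ᶠ k, f (k - 1) = ∑ᶠ k, f k := finsum_comp_equiv (Equiv.subRight 1)
  rw [finsum_sub_distrib hf (hf.fun_comp_of_injective (sub_left_injective (b := 1))), hshift,
    sub_self]

section LatticePaths

variable {t s a b c d : ℤ} {x : ℤ × ℤ} {l : List (ℤ × ℤ)}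

lemma pathPoints_cons :
    pathPoints a b (x :: l) = (a, b) :: pathPoints (a + x.1) (b + x.2) l := by
  simp [pathPoints]

lemma getLast?_pathPoints_cons :
    (pathPoints a b (x :: l)).getLast? = (pathPoints (a + x.1) (b + x.2) l).getLast? := by
  simp only [pathPoints, List.getLast?_scanl, List.foldl_cons]

lemma isConfinedPath_nil_iff :
    IsConfinedPath t s a b c d [] ↔ a = c ∧ b = d ∧ a + s ≤ b ∧ b ≤ a + t := by
  simp only [IsConfinedPath, pathPoints, List.scanl_nil, List.getLast?_singleton,
    Option.some.injEq, Prod.mk.injEq, List.forall_mem_singleton, List.not_mem_nil,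
    IsEmpty.forall_iff, implies_true, true_and, and_assoc]

lemma isConfinedPath_cons_iff :
    IsConfinedPath t s a b c d (x :: l) ↔ IsStep x ∧ (a + s ≤ b ∧ b ≤ a + t) ∧
      IsConfinedPath t s (a + x.1) (b + x.2) c d l := by
  rw [IsConfinedPath, IsConfinedPath, getLast?_pathPoints_cons, pathPoints_cons]
  simp only [List.forall_mem_cons]
  tauto

lemma IsConfinedPath.start_mem_band (h : IsConfinedPath t s a b c d l) :
    a + s ≤ b ∧ b ≤ a + t := by
  cases l with
  | nil => exact (isConfinedPath_nil_iff.mp h).2.2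
  | cons x l => exact (isConfinedPath_cons_iff.mp h).2.1

lemma IsConfinedPath.length_eq (h : IsConfinedPath t s a b c d l) :
    (l.length : ℤ) = c + d - a - b := by
  induction l generalizing a b with
  | nil => obtain ⟨rfl, rfl, -⟩ := isConfinedPath_nil_iff.mp h; simp
  | cons x l ih =>
    obtain ⟨hx, -, hl⟩ := isConfinedPath_cons_iff.mp h
    have := ih hl
    rcases hx with rfl | rfl <;> simp at this ⊢ <;> omega

def confinedPaths (t s a b c d : ℤ) : Set (List (ℤ × ℤ)) :=
  {l | IsConfinedPath t s a b c d l}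

lemma confinedPaths_finite : (confinedPaths t s a b c d).Finite := by
  let step : Bool → ℤ × ℤ := fun r => if r then (1, 0) else (0, 1)
  refine ((List.finite_length_eq Bool (c + d - a - b).toNat).image (List.map step)).subset ?_
  intro l (hl : IsConfinedPath t s a b c d l)
  refine ⟨l.map (· = (1, 0)), by simp [← hl.length_eq], ?_⟩
  rw [List.map_map, List.map_congr_left (g := id), List.map_id]
  intro x hx
  rcases hl.1 x hx with rfl | rfl <;> simp [step]

lemma confinedPaths_eq_empty (h : ¬ (a + s ≤ b ∧ b ≤ a + t)) :
    confinedPaths t s a b c d = ∅ :=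
  Set.eq_empty_of_forall_notMem fun _ hl => h hl.start_mem_band

lemma ncard_confinedPaths_of_le (hab : a + s ≤ b ∧ b ≤ a + t) (h : c + d ≤ a + b) :
    (confinedPaths t s a b c d).ncard = if a = c ∧ b = d then 1 else 0 := by
  have nil_of_mem : ∀ l ∈ confinedPaths t s a b c d, l = [] := fun l hl =>
    List.eq_nil_of_length_eq_zero (by have := IsConfinedPath.length_eq hl; omega)
  split_ifs with hend
  · rw [Set.ncard_eq_one]
    refine ⟨[], Set.eq_singleton_iff_unique_mem.mpr ⟨?_, nil_of_mem⟩⟩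
    exact isConfinedPath_nil_iff.mpr ⟨hend.1, hend.2, hab⟩
  · rw [Set.ncard_eq_zero confinedPaths_finite]
    refine Set.eq_empty_of_forall_notMem fun l hl => hend ?_
    have hnil : IsConfinedPath t s a b c d [] := nil_of_mem l hl ▸ hl
    exact ⟨(isConfinedPath_nil_iff.mp hnil).1, (isConfinedPath_nil_iff.mp hnil).2.1⟩

lemma confinedPaths_eq_union (hab : a + s ≤ b ∧ b ≤ a + t) (hend : ¬ (a = c ∧ b = d)) :
    confinedPaths t s a b c d =
      List.cons (1, 0) '' confinedPaths t s (a + 1) b c d ∪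
        List.cons (0, 1) '' confinedPaths t s a (b + 1) c d := by
  ext l
  cases l with
  | nil =>
    simp only [confinedPaths, Set.mem_ofPred_eq, isConfinedPath_nil_iff, Set.mem_union,
      Set.mem_image, reduceCtorEq, and_false, exists_false, or_false, iff_false]
    exact fun h => hend ⟨h.1, h.2.1⟩
  | cons x l =>
    simp only [confinedPaths, Set.mem_union, Set.mem_image, Set.mem_ofPred_eq, List.cons.injEq,
      isConfinedPath_cons_iff, IsStep, hab, true_and]
    constructor
    · rintro ⟨rfl | rfl, hl⟩
      · exact Or.inl ⟨l, by simpa using hl, rfl, rfl⟩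
      · exact Or.inr ⟨l, by simpa using hl, rfl, rfl⟩
    · rintro (⟨l, hl, rfl, rfl⟩ | ⟨l, hl, rfl, rfl⟩)
      · exact ⟨Or.inl rfl, by simpa using hl⟩
      · exact ⟨Or.inr rfl, by simpa using hl⟩

lemma ncard_confinedPaths_eq_add (hab : a + s ≤ b ∧ b ≤ a + t) (hend : ¬ (a = c ∧ b = d)) :
    (confinedPaths t s a b c d).ncard =
      (confinedPaths t s (a + 1) b c d).ncard + (confinedPaths t s a (b + 1) c d).ncard := by
  rw [confinedPaths_eq_union hab hend, Set.ncard_union_eq _ (confinedPaths_finite.image _)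
      (confinedPaths_finite.image _), Set.ncard_image_of_injective _ List.cons_injective,
    Set.ncard_image_of_injective _ List.cons_injective]
  rw [Set.disjoint_left]
  rintro _ ⟨l, -, rfl⟩ ⟨l', -, h⟩
  simp at h

def reflectionTerm (t s a b c d k : ℤ) : ℤ :=
  chooseZ (c + d - a - b) (c - a - k * (t - s + 2)) -
    chooseZ (c + d - a - b) (c - b - k * (t - s + 2) + t + 1)

noncomputable def reflectionSum (t s a b c d : ℤ) : ℤ := ∑ᶠ k, reflectionTerm t s a b c d k

lemma hasFiniteSupport_reflectionTerm (hP : t - s + 2 ≠ 0) :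
    HasFiniteSupport (reflectionTerm t s a b c d) := by
  have hterm : reflectionTerm t s a b c d = fun k =>
      chooseZ (c + d - a - b) (c - a - k * (t - s + 2)) -
        chooseZ (c + d - a - b) ((c - b + t + 1) - k * (t - s + 2)) := by
    funext k; rw [reflectionTerm]; congr 2; ring
  rw [hterm]
  exact (hasFiniteSupport_chooseZ_sub_mul _ _ hP).fun_sub
    (hasFiniteSupport_chooseZ_sub_mul _ _ hP)

lemma reflectionTerm_eq_add (h : a + b < c + d) (k : ℤ) :
    reflectionTerm t s a b c d k =
      reflectionTerm t s (a + 1) b c d k + reflectionTerm t s a (b + 1) c d k := by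
  have pascal : ∀ m, chooseZ (c + d - a - b) m =
      chooseZ (c + d - a - b - 1) (m - 1) + chooseZ (c + d - a - b - 1) m := fun m => by
    simpa using chooseZ_succ_succ (n := c + d - a - b - 1) (by omega) (m - 1)
  simp only [reflectionTerm, pascal]
  ring_nf

lemma reflectionSum_eq_add (hP : t - s + 2 ≠ 0) (h : a + b < c + d) :
    reflectionSum t s a b c d =
      reflectionSum t s (a + 1) b c d + reflectionSum t s a (b + 1) c d := by
  simp only [reflectionSum, reflectionTerm_eq_add h]
  exact finsum_add_distrib (hasFiniteSupport_reflectionTerm hP)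
    (hasFiniteSupport_reflectionTerm hP)

lemma reflectionSum_eq_zero_of_upper (hb : b = a + t + 1) : reflectionSum t s a b c d = 0 := by
  have hterm : ∀ k, reflectionTerm t s a b c d k = 0 := fun k => by
    rw [reflectionTerm, sub_eq_zero, hb]; congr 1; ring
  simp [reflectionSum, hterm]

lemma reflectionSum_eq_zero_of_lower (hP : t - s + 2 ≠ 0) (hb : b = a + s - 1) :
    reflectionSum t s a b c d = 0 := by
  rw [reflectionSum,
    ← finsum_sub_comp_sub_one_eq_zero (hasFiniteSupport_chooseZ_sub_mul _ (c - a) hP)]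
  congr; funext k
  rw [reflectionTerm, hb]; congr 2; ring

lemma reflectionSum_of_le (hab : a + s ≤ b ∧ b ≤ a + t) (hcd : c + s ≤ d ∧ d ≤ c + t)
    (h : c + d ≤ a + b) : reflectionSum t s a b c d = if a = c ∧ b = d then 1 else 0 := by
  rcases h.lt_or_eq with h | h
  · have hterm : ∀ k, reflectionTerm t s a b c d k = 0 := fun k => by
      rw [reflectionTerm, chooseZ_of_neg_left _ (by omega), chooseZ_of_neg_left _ (by omega),
        sub_zero]
    rw [reflectionSum, finsum_congr hterm, finsum_zero, if_neg (by omega)]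
  have hn : c + d - a - b = 0 := by omega
  -- Both endpoints lie in the band and on the same antidiagonal, so `|c - a| < t - s + 2`
  -- and `0 < c - b + t + 1 < t - s + 2`: neither is a nonzero multiple of `t - s + 2`.
  have hupper : ∀ k, chooseZ 0 (c - b - k * (t - s + 2) + t + 1) = 0 := fun k => by
    rw [chooseZ_zero_left, if_neg]
    intro hk
    have := Int.eq_zero_of_mul_eq_of_abs_lt (by omega : k * (t - s + 2) = c - b + t + 1)
      (abs_lt.mpr ⟨by omega, by omega⟩)
    subst this
    omega
  have hlower : ∀ k ≠ 0, chooseZ 0 (c - a - k * (t - s + 2)) = 0 := fun k hk => by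
    rw [chooseZ_zero_left, if_neg]
    intro hk'
    exact hk (Int.eq_zero_of_mul_eq_of_abs_lt (by omega : k * (t - s + 2) = c - a)
      (abs_lt.mpr ⟨by omega, by omega⟩))
  rw [reflectionSum, finsum_eq_single _ 0 fun k hk => by
    rw [reflectionTerm, hn, hupper, hlower k hk, sub_zero]]
  rw [reflectionTerm, hn, hupper, zero_mul, sub_zero, sub_zero, chooseZ_zero_left]
  exact if_congr (by omega) rfl rfl

-- The walls are admitted as starting lines because the induction steps onto them.
theorem ncard_confinedPaths (hcd : c + s ≤ d ∧ d ≤ c + t)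
    (hab : a + s - 1 ≤ b ∧ b ≤ a + t + 1) :
    ((confinedPaths t s a b c d).ncard : ℤ) = reflectionSum t s a b c d := by
  have hP : t - s + 2 ≠ 0 := by omega
  induction h : (c + d - a - b).toNat using Nat.strong_induction_on generalizing a b with
  | _ n ih =>
    rcases (show b = a + s - 1 ∨ b = a + t + 1 ∨ (a + s ≤ b ∧ b ≤ a + t) by omega)
      with hlower | hupper | hband
    · rw [confinedPaths_eq_empty (by omega), reflectionSum_eq_zero_of_lower hP hlower]; simp
    · rw [confinedPaths_eq_empty (by omega), reflectionSum_eq_zero_of_upper hupper]; simp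
    by_cases hle : c + d ≤ a + b
    · rw [ncard_confinedPaths_of_le hband hle, reflectionSum_of_le hband hcd hle]
      push_cast; rfl
    have hend : ¬ (a = c ∧ b = d) := by omega
    rw [ncard_confinedPaths_eq_add hband hend, reflectionSum_eq_add hP (by omega), Nat.cast_add,
      ih _ (by omega) (by omega) rfl, ih _ (by omega) (by omega) rfl]

end LatticePaths

theorem stmt_4 (t s a b c d : ℤ)
    (hb₁ : b ≤ a + t) (hb₂ : a + s ≤ b) (hd₁ : d ≤ c + t) (hd₂ : c + s ≤ d) :
    (Nat.card {l : List (ℤ × ℤ) // IsConfinedPath t s a b c d l} : ℤ)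
      = ∑ᶠ k : ℤ, (chooseZ (c + d - a - b) (c - a - k * (t - s + 2))
          - chooseZ (c + d - a - b) (c - b - k * (t - s + 2) + t + 1)) :=
  (congrArg Nat.cast (Nat.card_coe_set_eq (confinedPaths t s a b c d))).trans
    (ncard_confinedPaths ⟨hd₂, hd₁⟩ (by omega))
end

section
/- For real q > 1 and integer n ≥ 5, define F(n) = 1 - ((q-1)/q)(q^2/(q^2+1))^n (1 + n/q^2 + 2/q^4). Then 0 < F(n) < 1, and the infidelity 1 - F(n) tends to 0 as n → ∞, with (1 - F(n+1))/(1 - F(n)) → q^2/(q^2+1). -/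
lemma aux_pow (x : ℝ) (hx : 0 < x) : ∀ n : ℕ, 5 ≤ n → 1 + n*x + 2*x^2 ≤ (1+x)^n := by
  intro n hn
  induction n, hn using Nat.le_induction with
  | base =>
    push_cast
    nlinarith [pow_pos hx 2, pow_pos hx 3, pow_pos hx 4, pow_pos hx 5, hx.le]
  | succ n hn ih =>
    have h1 : (0:ℝ) < 1 + x := by linarith
    calc 1 + (n+1:ℕ)*x + 2*x^2 ≤ (1 + n*x + 2*x^2)*(1+x) := by
          push_cast
          nlinarith [mul_pos (mul_pos (Nat.cast_pos.mpr (by omega : 0 < n) : (0:ℝ) < n) hx) hx,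
            mul_pos (mul_pos hx hx) hx]
      _ ≤ (1+x)^n * (1+x) := by
          apply mul_le_mul_of_nonneg_right ih (le_of_lt h1)
      _ = (1+x)^(n+1) := (pow_succ _ _).symm

theorem stmt_7 (q : ℝ) (hq : 1 < q) :
    let F : ℕ → ℝ := fun n =>
      1 - ((q - 1) / q) * (q^2 / (q^2 + 1))^n * (1 + (n : ℝ) / q^2 + 2 / q^4)
    (∀ n : ℕ, 5 ≤ n → 0 < F n ∧ F n < 1) ∧
    Filter.Tendsto (fun n => 1 - F n) Filter.atTop (nhds 0) ∧
    Filter.Tendsto (fun n => (1 - F (n + 1)) / (1 - F n)) Filter.atTop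
      (nhds (q^2 / (q^2 + 1))) := by
  intro F
  have hq0 : (0:ℝ) < q := lt_trans one_pos hq
  have hq2 : (0:ℝ) < q^2 := by positivity
  set r : ℝ := q^2/(q^2+1) with hr_def
  clear_value r
  have hr0 : 0 < r := by rw [hr_def]; positivity
  have hr1 : r < 1 := by
    rw [hr_def, div_lt_one (by positivity)]; linarith
  have hc0 : 0 < (q-1)/q := div_pos (by linarith) hq0
  have hc1 : (q-1)/q < 1 := (div_lt_one hq0).mpr (by linarith)
  have hd : ∀ n : ℕ, (0:ℝ) < 1 + (n:ℝ)/q^2 + 2/q^4 := fun n => by positivity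
  have hF : ∀ n : ℕ, 1 - F n = ((q-1)/q) * r^n * (1 + (n:ℝ)/q^2 + 2/q^4) := by
    intro n; simp only [F]; rw [hr_def]; ring
  have hx : (0:ℝ) < 1/q^2 := by positivity
  have hrx : r * (1 + 1/q^2) = 1 := by
    rw [hr_def]; field_simp
  refine ⟨?_, ?_, ?_⟩
  · intro n hn
    have h1mF : 0 < 1 - F n := by
      rw [hF]; positivity
    constructor
    · -- F n > 0 i.e. 1 - F n < 1
      have key : r^n * (1 + (n:ℝ)/q^2 + 2/q^4) ≤ 1 := by
        have hb := aux_pow (1/q^2) hx n hn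
        have : (1 + (n:ℝ)/q^2 + 2/q^4) ≤ (1 + 1/q^2)^n := by
          have e : (n:ℝ)*(1/q^2) = (n:ℝ)/q^2 := by ring
          have e2 : 2*(1/q^2)^2 = 2/q^4 := by field_simp
          linarith [hb, e ▸ hb]
        calc r^n * (1 + (n:ℝ)/q^2 + 2/q^4) ≤ r^n * (1 + 1/q^2)^n :=
              mul_le_mul_of_nonneg_left this (le_of_lt (pow_pos hr0 n))
          _ = (r * (1 + 1/q^2))^n := (mul_pow _ _ _).symm
          _ = 1 := by rw [hrx, one_pow]
      have : 1 - F n ≤ (q-1)/q := by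
        rw [hF, mul_assoc]
        calc ((q-1)/q) * (r^n * (1 + (n:ℝ)/q^2 + 2/q^4)) ≤ ((q-1)/q) * 1 :=
              mul_le_mul_of_nonneg_left key (le_of_lt hc0)
          _ = (q-1)/q := mul_one _
      have hFn : (1:ℝ) - F n < 1 := lt_of_le_of_lt this hc1
      linarith
    · linarith
  · have h1 : Filter.Tendsto (fun n : ℕ => r^n) Filter.atTop (nhds 0) :=
      tendsto_pow_atTop_nhds_zero_of_lt_one (le_of_lt hr0) hr1
    have h2 : Filter.Tendsto (fun n : ℕ => (n:ℝ) * r^n) Filter.atTop (nhds 0) :=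
      tendsto_self_mul_const_pow_of_lt_one (le_of_lt hr0) hr1
    have : Filter.Tendsto (fun n : ℕ =>
        ((q-1)/q)*(1 + 2/q^4) * r^n + ((q-1)/q/q^2) * ((n:ℝ)*r^n)) Filter.atTop (nhds 0) := by
      have := (h1.const_mul (((q-1)/q)*(1 + 2/q^4))).add (h2.const_mul ((q-1)/q/q^2))
      simpa using this
    refine this.congr fun n => ?_
    rw [hF]; ring
  · have hdtop : Filter.Tendsto (fun n : ℕ => 1 + (n:ℝ)/q^2 + 2/q^4) Filter.atTop Filter.atTop := by
      apply Filter.tendsto_atTop_add_const_right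
      apply Filter.tendsto_atTop_add_const_left
      exact (tendsto_natCast_atTop_atTop (R := ℝ)).atTop_div_const hq2
    have hinv : Filter.Tendsto (fun n : ℕ => (1 + (n:ℝ)/q^2 + 2/q^4)⁻¹) Filter.atTop (nhds 0) :=
      hdtop.inv_tendsto_atTop
    have hlim : Filter.Tendsto (fun n : ℕ => r * (1 + (1/q^2) * (1 + (n:ℝ)/q^2 + 2/q^4)⁻¹))
        Filter.atTop (nhds r) := by
      have := ((hinv.const_mul (1/q^2)).const_add 1).const_mul r
      simpa using this
    refine hlim.congr fun n => ?_
    rw [hF, hF]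
    have hdn := hd n
    have hne : (1 + (n:ℝ)/q^2 + 2/q^4) ≠ 0 := ne_of_gt hdn
    have hcne : ((q-1)/q) ≠ 0 := ne_of_gt hc0
    have hrne : r^n ≠ 0 := ne_of_gt (pow_pos hr0 n)
    have hqne : q ≠ 0 := ne_of_gt hq0
    have hden : (q-1)/q * r^n * (1 + (n:ℝ)/q^2 + 2/q^4) ≠ 0 :=
      mul_ne_zero (mul_ne_zero hcne hrne) hne
    rw [eq_div_iff hden, pow_succ]
    push_cast
    field_simp
    ring
end

section
/- For real q > 1 and integer n ≥ 6, the quantity 1 - F_1^{m=3}(n), where F_1^{m=3}(n) = 1 - ((q-1)/q)(q^2/(q^2+1))^{n+2}(1 + 1/q^2 + (1+n)(2+n)/(2q^4) + 2(2+n)/q^6 + 3/q^8), is positive and satisfies lim_{n→∞} (1 - F_1^{m=3}(n+1))/(1 - F_1^{m=3}(n)) = q^2/(q^2+1). -/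
open Filter

theorem stmt_8 (q : ℝ) (hq : 1 < q) :
    let F : ℕ → ℝ := fun n =>
      1 - ((q - 1) / q) * (q^2 / (q^2 + 1))^(n + 2) *
        (1 + 1 / q^2 + ((1 : ℝ) + n) * (2 + n) / (2 * q^4) + 2 * (2 + (n : ℝ)) / q^6 + 3 / q^8)
    (∀ n : ℕ, 6 ≤ n → 0 < 1 - F n) ∧
    Filter.Tendsto (fun n => (1 - F (n + 1)) / (1 - F n)) Filter.atTop
      (nhds (q^2 / (q^2 + 1))) := by
  intro F
  have hq0 : 0 < q := by linarith
  have hq1 : 0 < q - 1 := by linarith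
  set r : ℝ := q^2 / (q^2 + 1) with hr_def
  have hr : 0 < r := by positivity
  set P : ℕ → ℝ := fun n =>
    1 + 1 / q^2 + ((1 : ℝ) + n) * (2 + n) / (2 * q^4) + 2 * (2 + (n : ℝ)) / q^6 + 3 / q^8
    with hP_def
  have hK : 0 < (q - 1) / q := div_pos hq1 hq0
  have hP : ∀ n : ℕ, 0 < P n := by
    intro n
    have hn : (0:ℝ) ≤ (n:ℝ) := n.cast_nonneg
    simp only [hP_def]
    positivity
  have hF : ∀ n : ℕ, 1 - F n = ((q - 1) / q) * r ^ (n + 2) * P n := by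
    intro n; simp only [F, hP_def]; ring
  refine ⟨fun n _ => by rw [hF]; exact mul_pos (mul_pos hK (pow_pos hr _)) (hP n), ?_⟩
  -- quadratic coefficients
  set A : ℝ := 1 + 1/q^2 + 1/q^4 + 4/q^6 + 3/q^8 with hA_def
  set B : ℝ := 3/(2*q^4) + 2/q^6 with hB_def
  set C : ℝ := 1/(2*q^4) with hC_def
  have hqne : q ≠ 0 := hq0.ne'
  have hPeq : ∀ n : ℕ, P n = A + B * n + C * n^2 := by
    intro n
    simp only [hP_def, hA_def, hB_def, hC_def]
    field_simp
    ring
  have hC0 : 0 < C := by positivity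
  set f : ℕ → ℝ := fun n => A * (1/(n:ℝ)) * (1/(n:ℝ)) + B * (1/(n:ℝ)) + C with hf_def
  have h1 : Tendsto (fun n : ℕ => 1/(n:ℝ)) atTop (nhds 0) :=
    tendsto_one_div_atTop_nhds_zero_nat
  have hf : Tendsto f atTop (nhds C) := by
    have : Tendsto f atTop (nhds (A * 0 * 0 + B * 0 + C)) :=
      (((tendsto_const_nhds.mul h1).mul h1).add (tendsto_const_nhds.mul h1)).add
        tendsto_const_nhds
    simpa using this
  have hf' : Tendsto (fun n => f (n + 1)) atTop (nhds C) :=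
    hf.comp (tendsto_add_atTop_nat 1)
  have hquot : Tendsto (fun n => f (n + 1) / f n) atTop (nhds (C / C)) :=
    hf'.div hf hC0.ne'
  have hratio : Tendsto (fun n : ℕ => ((n:ℝ) + 1) / n) atTop (nhds 1) := by
    have h : Tendsto (fun n : ℕ => 1 + 1/(n:ℝ)) atTop (nhds (1 + 0)) :=
      tendsto_const_nhds.add h1
    apply Tendsto.congr' _ (by simpa using h)
    filter_upwards [eventually_ge_atTop 1] with n hn
    have hx : (n:ℝ) ≠ 0 := by positivity
    field_simp
  have hmain : Tendsto
      (fun n : ℕ => r * (f (n + 1) / f n) * (((n:ℝ) + 1) / n * (((n:ℝ) + 1) / n)))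
      atTop (nhds r) := by
    have := ((tendsto_const_nhds : Tendsto (fun _ : ℕ => r) atTop (nhds r)).mul
      hquot).mul (hratio.mul hratio)
    have hCC : C / C = 1 := div_self hC0.ne'
    simpa [hCC] using this
  apply Tendsto.congr' _ hmain
  filter_upwards [eventually_ge_atTop 1] with n hn
  have hx : (0:ℝ) < (n:ℝ) := by exact_mod_cast hn
  have hx1 : (0:ℝ) < (n:ℝ) + 1 := by positivity
  have hfn : f n = P n / (n:ℝ)^2 := by
    rw [hPeq]; simp only [hf_def]; field_simp
  have hfn1 : f (n + 1) = P (n + 1) / ((n:ℝ) + 1)^2 := by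
    rw [hPeq]; simp only [hf_def]; push_cast; field_simp
  rw [hfn, hfn1]
  rw [hF, hF]
  rw [show n + 1 + 2 = (n + 2) + 1 from rfl, pow_succ]
  have hPn : P n ≠ 0 := (hP n).ne'
  have hPn1 : P (n + 1) ≠ 0 := (hP (n+1)).ne'
  have hKne : (q - 1) / q ≠ 0 := hK.ne'
  have hrp : r ^ (n + 2) ≠ 0 := (pow_pos hr _).ne'
  field_simp
  ring
end

section
/- For real q > 1 and fixed n ≥ k+1 ≥ 3, the infidelity 1 - F_{1→k}(n) with F_{1→k}(n) = 1 - (q^2/(q^2+1))^{n-k}(1 - (1/(q(q^2-q+1)))(1 + ((q-1)^2/q)(q/(q^2+1))^{k-2})) is strictly increasing in k; equivalently, to keep fidelity at least a fixed value one must increase n as k increases. -/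
/-!
The infidelity `1 - F k` is the product `r ^ (n - k) * recyclingFactor q (k - 2)` with
`r = q² / (q² + 1) < 1`. The first factor increases strictly with `k` because its exponent
decreases; the second increases because `(q / (q² + 1)) ^ (k - 2)` decreases and enters with a
negative coefficient, and it is positive since its value at `k = 2` is `1 - 1 / q²`.
-/

noncomputable def recyclingFactor (q : ℝ) (j : ℕ) : ℝ :=
  1 - 1 / (q * (q ^ 2 - q + 1)) * (1 + (q - 1) ^ 2 / q * (q / (q ^ 2 + 1)) ^ j)

lemma sq_sub_self_add_one_pos (q : ℝ) : 0 < q ^ 2 - q + 1 := by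
  nlinarith [sq_nonneg (q - 1 / 2)]

lemma sq_div_sq_add_one_lt_one (q : ℝ) : q ^ 2 / (q ^ 2 + 1) < 1 :=
  (div_lt_one (by positivity)).2 (lt_add_one _)

lemma div_sq_add_one_lt_one (q : ℝ) : q / (q ^ 2 + 1) < 1 :=
  (div_lt_one (by positivity)).2 (by linarith [sq_sub_self_add_one_pos q])

lemma recyclingFactor_strictMono {q : ℝ} (hq : 0 < q) (hq1 : q ≠ 1) :
    StrictMono (recyclingFactor q) := by
  intro i j hij
  have hD := sq_sub_self_add_one_pos q
  have hB : 0 < (q - 1) ^ 2 / q := div_pos (pow_two_pos_of_ne_zero (sub_ne_zero.2 hq1)) hq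
  have hpow : (q / (q ^ 2 + 1)) ^ j < (q / (q ^ 2 + 1)) ^ i :=
    pow_lt_pow_right_of_lt_one₀ (by positivity) (div_sq_add_one_lt_one q) hij
  unfold recyclingFactor
  gcongr

lemma recyclingFactor_zero {q : ℝ} (hq : q ≠ 0) : recyclingFactor q 0 = 1 - 1 / q ^ 2 := by
  have hD := (sq_sub_self_add_one_pos q).ne'
  have h : 1 + (q - 1) ^ 2 / q = (q ^ 2 - q + 1) / q := by field_simp; ring
  rw [recyclingFactor, pow_zero, mul_one, h]
  -- an opaque `D` stops `field_simp` from rewriting `q ^ 2 - q + 1` into a form it cannot cancel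
  generalize q ^ 2 - q + 1 = D at *
  field_simp

lemma recyclingFactor_pos {q : ℝ} (hq : 1 < q) (j : ℕ) : 0 < recyclingFactor q j := by
  have hq0 : 0 < q := zero_lt_one.trans hq
  calc 0 < 1 - 1 / q ^ 2 := sub_pos.2 ((div_lt_one (by positivity)).2 (one_lt_pow₀ hq two_ne_zero))
    _ = recyclingFactor q 0 := (recyclingFactor_zero hq0.ne').symm
    _ ≤ recyclingFactor q j := (recyclingFactor_strictMono hq0 hq.ne').monotone j.zero_le

theorem stmt_17 (q : ℝ) (hq : 1 < q) (n : ℕ) :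
    let F : ℕ → ℝ := fun k =>
      1 - (q^2 / (q^2 + 1))^(n - k) *
        (1 - (1 / (q * (q^2 - q + 1))) *
          (1 + ((q - 1)^2 / q) * (q / (q^2 + 1))^(k - 2)))
    ∀ k₁ k₂ : ℕ, 2 ≤ k₁ → k₁ < k₂ → k₂ + 1 ≤ n → 1 - F k₁ < 1 - F k₂ := by
  intro F k₁ k₂ hk₁ hk hn
  have hF (k : ℕ) : 1 - F k = (q ^ 2 / (q ^ 2 + 1)) ^ (n - k) * recyclingFactor q (k - 2) :=
    sub_sub_cancel _ _
  rw [hF, hF]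
  refine mul_lt_mul'' ?_ ?_ (by positivity) (recyclingFactor_pos hq _).le
  · exact pow_lt_pow_right_of_lt_one₀ (by positivity) (sq_div_sq_add_one_lt_one q) (by omega)
  · exact recyclingFactor_strictMono (zero_lt_one.trans hq) hq.ne' (by omega)
end
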